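/- arXiv:1903.02951 — 5 statements merged into one kernel-verified Lean document; each statement's English description precedes it below -/
import Mathlib

section
/- For every integer n ≥ 2 and every integer q ≥ 2, the value of the n-th cyclotomic polynomial at q satisfies (1 - 1/q) · q^{φ(n)} < Φ_n(q) < (1 - 1/q)^{-1} · q^{φ(n)}, where φ is Euler's totient function. -/
/-!
Put `x = q⁻¹`. Möbius inversion of `q ^ k - 1 = ∏_{d ∣ k} Φ_d(q)` gives
`log Φ_n(q) - φ(n) log q = ∑_{d ∣ n} μ(n/d) log (1 - x ^ d)`, and it suffices to show that this
sum has absolute value less than `-log (1 - x)`. Since `Φ_n(q) = Φ_r(q ^ (n / r))` for the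
radical `r` of `n`, we may assume `n` squarefree. If `p` is the least prime factor of `n`, the
terms `d = 1` and `d = p` have opposite signs and together contribute at most
`log (1 - x ^ p) - log (1 - x)`. Every other divisor is at least `3` and differs from `4`, and is
at least `p + 2` when `p` is odd; this makes the remaining terms add up to less than
`-log (1 - x ^ p)`.
-/

open Polynomial ArithmeticFunction Finset Real
open scoped ArithmeticFunction.Moebius

theorem Real.neg_log_one_sub_le {z : ℝ} (hz : z < 1) : -log (1 - z) ≤ z / (1 - z) := by
  have hz' : 0 < 1 - z := sub_pos.mpr hz
  have h := one_sub_inv_le_log_of_pos hz'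
  have : z / (1 - z) = (1 - z)⁻¹ - 1 := by field_simp [hz'.ne']; ring
  linarith

theorem Real.le_neg_log_one_sub {z : ℝ} (hz : z < 1) : z ≤ -log (1 - z) := by
  linarith [log_le_sub_one_of_pos (sub_pos.mpr hz)]

theorem Real.neg_log_one_sub_pow_le {y : ℝ} (hy0 : 0 ≤ y) (hy : y ≤ 1 / 2) {d : ℕ} (hd : 3 ≤ d) :
    -log (1 - y ^ d) ≤ 8 / 7 * y ^ d := by
  have hyd : y ^ d ≤ 1 / 8 :=
    calc y ^ d ≤ y ^ 3 := pow_le_pow_of_le_one hy0 (by linarith) hd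
      _ ≤ (1 / 2) ^ 3 := pow_le_pow_left₀ hy0 hy 3
      _ = 1 / 8 := by norm_num
  refine (neg_log_one_sub_le (by linarith)).trans ?_
  rw [div_le_iff₀ (by linarith)]
  nlinarith [pow_nonneg hy0 d]

theorem Real.mul_lt_and_lt_inv_mul_of_abs_log_sub_lt {a b c : ℝ} (ha : 0 < a) (hb : 0 < b)
    (hc : 0 < c) (h : |log a - log b| < -log c) : c * b < a ∧ a < c⁻¹ * b := by
  rw [abs_lt] at h
  constructor
  · rw [← log_lt_log_iff (by positivity) ha, log_mul hc.ne' hb.ne']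
    linarith
  · rw [← log_lt_log_iff ha (by positivity), log_mul (inv_ne_zero hc.ne') hb.ne', log_inv]
    linarith

theorem Finset.sum_pow_le_two_mul_pow {y : ℝ} (hy0 : 0 ≤ y) (hy : y ≤ 1 / 2) {s : Finset ℕ}
    {a : ℕ} (hs : ∀ d ∈ s, a ≤ d) : ∑ d ∈ s, y ^ d ≤ 2 * y ^ a := by
  have hsub : s ⊆ Ico a (s.sup id + 1) := fun d hd ↦
    mem_Ico.mpr ⟨hs d hd, Nat.lt_succ_of_le (le_sup (f := id) hd)⟩
  calc ∑ d ∈ s, y ^ d ≤ ∑ d ∈ Ico a (s.sup id + 1), y ^ d :=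
        sum_le_sum_of_subset_of_nonneg hsub fun _ _ _ ↦ pow_nonneg hy0 _
    _ ≤ y ^ a / (1 - y) := geom_sum_Ico_le_of_lt_one hy0 (by linarith)
    _ ≤ 2 * y ^ a := by
        rw [div_le_iff₀ (by linarith)]
        nlinarith [pow_nonneg hy0 a]

theorem Nat.minFac_lt_of_dvd {n d : ℕ} (hn : n ≠ 0) (hd : d ∣ n) (hd1 : d ≠ 1)
    (hdp : d ≠ n.minFac) : n.minFac < d := by
  have hd0 : d ≠ 0 := by rintro rfl; exact hn (Nat.eq_zero_of_zero_dvd hd)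
  exact (Nat.minFac_le_of_dvd (by omega) hd).lt_of_ne' hdp

theorem Nat.minFac_add_two_le_of_dvd {n d : ℕ} (h2 : n.minFac ≠ 2) (hd : d ∣ n) (hd1 : d ≠ 1)
    (hdp : d ≠ n.minFac) : n.minFac + 2 ≤ d := by
  have hn0 : n ≠ 0 := by rintro rfl; exact h2 Nat.minFac_zero
  have hp : n.minFac.Prime := Nat.minFac_prime fun h ↦ hd1 (Nat.dvd_one.mp (h ▸ hd))
  have hp_odd : n.minFac % 2 = 1 := Nat.odd_iff.mp (hp.odd_of_ne_two h2)
  have hd_odd : d % 2 = 1 := Nat.two_dvd_ne_zero.mp fun h ↦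
    h2 (le_antisymm (Nat.minFac_le_of_dvd le_rfl (h.trans hd)) hp.two_le)
  have := Nat.minFac_lt_of_dvd hn0 hd hd1 hdp
  omega

theorem Nat.squarefree_prod_primeFactors (n : ℕ) : Squarefree (∏ p ∈ n.primeFactors, p) :=
  squarefree_prod_of_pairwise_isCoprime
    (fun _ hp _ hq hpq ↦ Nat.coprime_iff_isRelPrime.mp <|
      (Nat.coprime_primes (Nat.prime_of_mem_primeFactors hp)
        (Nat.prime_of_mem_primeFactors hq)).mpr hpq)
    fun _ hp ↦ (Nat.prime_of_mem_primeFactors hp).squarefree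

theorem Squarefree.sum_pow_divisors_sdiff_le {n : ℕ} (hn : Squarefree n) {y : ℝ} (hy0 : 0 ≤ y)
    (hy : y ≤ 1 / 2) : ∑ d ∈ n.divisors \ {1, n.minFac}, y ^ d ≤ 3 / 4 * y ^ n.minFac := by
  set T := n.divisors \ {1, n.minFac}
  have hT : ∀ d ∈ T, d ∣ n ∧ d ≠ 1 ∧ d ≠ n.minFac := fun d hd ↦ by
    simp only [T, mem_sdiff, Nat.mem_divisors, mem_insert, mem_singleton, not_or] at hd
    exact ⟨hd.1.1, hd.2⟩
  by_cases h2 : n.minFac = 2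
  · have h5 : ∀ d ∈ T.erase 3, 5 ≤ d := fun d hd ↦ by
      obtain ⟨hd3, hdT⟩ := mem_erase.mp hd
      obtain ⟨hdn, hd1, hdp⟩ := hT d hdT
      have hd4 : d ≠ 4 := by
        rintro rfl
        exact absurd (hn 2 (dvd_trans (by norm_num) hdn)) (by decide)
      have := Nat.minFac_lt_of_dvd hn.ne_zero hdn hd1 hdp
      omega
    calc ∑ d ∈ T, y ^ d ≤ ∑ d ∈ insert 3 (T.erase 3), y ^ d :=
          sum_le_sum_of_subset_of_nonneg (insert_erase_subset 3 T) fun _ _ _ ↦ pow_nonneg hy0 _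
      _ = y ^ 3 + ∑ d ∈ T.erase 3, y ^ d := sum_insert (notMem_erase 3 T)
      _ ≤ y ^ 3 + 2 * y ^ 5 := by grw [sum_pow_le_two_mul_pow hy0 hy h5]
      _ ≤ 3 / 4 * y ^ n.minFac := by
          rw [h2]
          nlinarith [pow_nonneg hy0 2, pow_nonneg hy0 3, mul_le_mul_of_nonneg_left hy hy0]
  · calc ∑ d ∈ T, y ^ d ≤ 2 * y ^ (n.minFac + 2) := sum_pow_le_two_mul_pow hy0 hy fun d hd ↦
          Nat.minFac_add_two_le_of_dvd h2 (hT d hd).1 (hT d hd).2.1 (hT d hd).2.2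
      _ ≤ 3 / 4 * y ^ n.minFac := by
          rw [pow_add]
          nlinarith [pow_nonneg hy0 n.minFac, mul_le_mul_of_nonneg_left hy hy0]

theorem Squarefree.sum_neg_log_one_sub_pow_divisors_sdiff_lt {n : ℕ} (hn : Squarefree n)
    {y : ℝ} (hy0 : 0 < y) (hy : y ≤ 1 / 2) :
    ∑ d ∈ n.divisors \ {1, n.minFac}, -log (1 - y ^ d) < -log (1 - y ^ n.minFac) := by
  have h3 : ∀ d ∈ n.divisors \ {1, n.minFac}, 3 ≤ d := fun d hd ↦ by
    simp only [mem_sdiff, Nat.mem_divisors, mem_insert, mem_singleton, not_or] at hd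
    obtain ⟨⟨hdn, -⟩, hd1, hdp⟩ := hd
    have hp := Nat.minFac_prime fun h ↦ hd1 (Nat.dvd_one.mp (h ▸ hdn))
    have := Nat.minFac_lt_of_dvd hn.ne_zero hdn hd1 hdp
    linarith [hp.two_le]
  have hyp : 0 < y ^ n.minFac := pow_pos hy0 _
  have hyp1 : y ^ n.minFac < 1 := pow_lt_one₀ hy0.le (by linarith) (Nat.minFac_pos n).ne'
  calc ∑ d ∈ n.divisors \ {1, n.minFac}, -log (1 - y ^ d)
        ≤ ∑ d ∈ n.divisors \ {1, n.minFac}, 8 / 7 * y ^ d :=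
          sum_le_sum fun d hd ↦ neg_log_one_sub_pow_le hy0.le hy (h3 d hd)
    _ ≤ 8 / 7 * (3 / 4 * y ^ n.minFac) := by
          rw [← mul_sum]; grw [hn.sum_pow_divisors_sdiff_le hy0.le hy]
    _ < y ^ n.minFac := by linarith
    _ ≤ -log (1 - y ^ n.minFac) := le_neg_log_one_sub hyp1

theorem Squarefree.abs_sum_moebius_mul_log_one_sub_pow_lt {n : ℕ} (hn : Squarefree n)
    (hn1 : n ≠ 1) {y : ℝ} (hy0 : 0 < y) (hy : y ≤ 1 / 2) :
    |∑ d ∈ n.divisors, (μ (n / d) : ℝ) * log (1 - y ^ d)| < -log (1 - y) := by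
  set p := n.minFac
  have hp : p.Prime := Nat.minFac_prime hn1
  have hpn : p ∣ n := Nat.minFac_dvd n
  have hμ : (μ (n / p) : ℝ) = -μ n := by
    have hcop : p.Coprime (n / p) :=
      Nat.coprime_of_squarefree_mul (by rwa [Nat.mul_div_cancel' hpn])
    have h := isMultiplicative_moebius.map_mul_of_coprime hcop
    rw [Nat.mul_div_cancel' hpn, moebius_apply_prime hp] at h
    rw [h]; push_cast; ring
  have hterm : ∀ (m d : ℕ), d ≠ 0 → |(μ m : ℝ) * log (1 - y ^ d)| ≤ -log (1 - y ^ d) := by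
    intro m d hd
    have hyd : y ^ d < 1 := pow_lt_one₀ hy0.le (by linarith) hd
    have hlog : log (1 - y ^ d) ≤ 0 :=
      log_nonpos (by linarith) (by linarith [pow_pos hy0 d])
    rw [abs_mul, abs_of_nonpos hlog]
    exact mul_le_of_le_one_left (neg_nonneg.mpr hlog) (by exact_mod_cast abs_moebius_le_one)
  have hpair : ∑ d ∈ {1, p}, (μ (n / d) : ℝ) * log (1 - y ^ d) =
      μ n * (log (1 - y) - log (1 - y ^ p)) := by
    rw [sum_pair hp.one_lt.ne, Nat.div_one, pow_one, hμ]; ring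
  have hpair_le : |(μ n : ℝ) * (log (1 - y) - log (1 - y ^ p))| ≤
      log (1 - y ^ p) - log (1 - y) := by
    have hyp : y ^ p ≤ y := pow_le_of_le_one hy0.le (by linarith) hp.ne_zero
    have hlog : log (1 - y) ≤ log (1 - y ^ p) := log_le_log (by linarith) (by linarith)
    rw [abs_mul, abs_sub_comm, abs_of_nonneg (sub_nonneg.mpr hlog)]
    exact mul_le_of_le_one_left (sub_nonneg.mpr hlog) (by exact_mod_cast abs_moebius_le_one)
  have hrest : |∑ d ∈ n.divisors \ {1, p}, (μ (n / d) : ℝ) * log (1 - y ^ d)| <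
      -log (1 - y ^ p) :=
    (abs_sum_le_sum_abs _ _).trans_lt <| (sum_le_sum fun d hd ↦ hterm _ d
      (Nat.pos_of_mem_divisors (mem_sdiff.mp hd).1).ne').trans_lt
      (hn.sum_neg_log_one_sub_pow_divisors_sdiff_lt hy0 hy)
  have hsub : {1, p} ⊆ n.divisors := by
    simp [insert_subset_iff, hpn, hn.ne_zero]
  rw [← sum_sdiff hsub, hpair]
  linarith [abs_add_le (∑ d ∈ n.divisors \ {1, p}, (μ (n / d) : ℝ) * log (1 - y ^ d))
    ((μ n : ℝ) * (log (1 - y) - log (1 - y ^ p)))]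

theorem Polynomial.expand_cyclotomic_of_primeFactors_subset {k : ℕ} (hk : k ≠ 0) (R : Type*)
    [CommRing R] : ∀ {r : ℕ}, k.primeFactors ⊆ r.primeFactors →
      expand R k (cyclotomic r R) = cyclotomic (r * k) R := by
  induction k using Nat.recOnMul with
  | zero => exact absurd rfl hk
  | one => simp
  | prime p hp =>
    intro r h
    exact cyclotomic_expand_eq_cyclotomic hp
      (Nat.dvd_of_mem_primeFactors (h (hp.primeFactors ▸ mem_singleton_self p))) R
  | mul a b iha ihb =>
    intro r h
    obtain ⟨ha, hb⟩ : a ≠ 0 ∧ b ≠ 0 := by simpa [not_or] using hk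
    rw [Nat.primeFactors_mul ha hb, union_subset_iff] at h
    rcases eq_or_ne r 0 with rfl | hr
    · simp
    rw [expand_mul, ihb hb h.2, iha ha (h.1.trans (Nat.primeFactors_mono (dvd_mul_right r b)
      (mul_ne_zero hr hb))), mul_comm a b, mul_assoc]

theorem Polynomial.sum_divisors_log_cyclotomic_eval_sub {Q : ℝ} (hQ : 1 < Q) {k : ℕ}
    (hk : 0 < k) :
    ∑ d ∈ k.divisors, (log ((cyclotomic d ℝ).eval Q) - d.totient * log Q) =
      log (1 - Q⁻¹ ^ k) := by
  have hQk : Q ^ k ≠ 0 := pow_ne_zero k (by positivity)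
  have hprod : ∏ d ∈ k.divisors, (cyclotomic d ℝ).eval Q = Q ^ k * (1 - Q⁻¹ ^ k) := by
    rw [← eval_prod, prod_cyclotomic_eq_X_pow_sub_one hk, inv_pow, mul_sub,
      mul_inv_cancel₀ hQk]
    simp
  have htotient : ∑ d ∈ k.divisors, (d.totient : ℝ) = k := by exact_mod_cast Nat.sum_totient k
  rw [sum_sub_distrib, ← log_prod fun d _ ↦ (cyclotomic_pos' d hQ).ne', hprod,
    ← sum_mul, htotient, log_mul hQk, log_pow]
  · ring
  · rw [sub_ne_zero, ne_comm]
    exact (pow_lt_one₀ (by positivity) (inv_lt_one_of_one_lt₀ hQ) hk.ne').ne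

theorem Polynomial.log_cyclotomic_eval_sub_eq_sum_moebius {Q : ℝ} (hQ : 1 < Q) {n : ℕ}
    (hn : 0 < n) :
    log ((cyclotomic n ℝ).eval Q) - n.totient * log Q =
      ∑ d ∈ n.divisors, (μ (n / d) : ℝ) * log (1 - Q⁻¹ ^ d) := by
  rw [← Nat.sum_divisorsAntidiagonal' fun a d ↦ (μ a : ℝ) * log (1 - Q⁻¹ ^ d)]
  exact (sum_eq_iff_sum_mul_moebius_eq.mp
    (fun k hk ↦ sum_divisors_log_cyclotomic_eval_sub hQ hk) n hn).symm

theorem Squarefree.abs_log_cyclotomic_eval_sub_lt {n : ℕ} (hn : Squarefree n) (hn1 : n ≠ 1)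
    {Q : ℝ} (hQ : 2 ≤ Q) :
    |log ((cyclotomic n ℝ).eval Q) - n.totient * log Q| < -log (1 - Q⁻¹) := by
  rw [log_cyclotomic_eval_sub_eq_sum_moebius (by linarith) (Nat.pos_of_ne_zero hn.ne_zero)]
  exact hn.abs_sum_moebius_mul_log_one_sub_pow_lt hn1 (by positivity)
    (by rw [one_div]; exact inv_anti₀ two_pos hQ)

theorem Polynomial.abs_log_cyclotomic_eval_sub_lt {n : ℕ} (hn : 1 < n) {Q : ℝ} (hQ : 2 ≤ Q) :
    |log ((cyclotomic n ℝ).eval Q) - n.totient * log Q| < -log (1 - Q⁻¹) := by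
  set r := ∏ p ∈ n.primeFactors, p
  set k := n / r
  have hrk : r * k = n := Nat.mul_div_cancel' (Nat.prod_primeFactors_dvd n)
  have hk : k ≠ 0 := by rintro h; rw [h, mul_zero] at hrk; omega
  have hkr : k.primeFactors ⊆ r.primeFactors := by
    rw [Nat.primeFactors_prod_primeFactors]
    exact Nat.primeFactors_mono (Nat.div_dvd_of_dvd (Nat.prod_primeFactors_dvd n)) (by omega)
  have hr1 : r ≠ 1 := by
    intro h
    rw [h, Nat.primeFactors_one, subset_empty, Nat.primeFactors_eq_empty] at hkr
    rw [h, one_mul] at hrk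
    omega
  have hexp := expand_cyclotomic_of_primeFactors_subset hk ℝ hkr
  rw [hrk] at hexp
  have heval : (cyclotomic n ℝ).eval Q = (cyclotomic r ℝ).eval (Q ^ k) := by
    rw [← hexp, expand_eval]
  have htot : n.totient = r.totient * k := by
    rw [← natDegree_cyclotomic n ℝ, ← hexp, natDegree_expand, natDegree_cyclotomic]
  have hQk : Q ≤ Q ^ k := le_self_pow₀ (by linarith) hk
  calc |log ((cyclotomic n ℝ).eval Q) - n.totient * log Q|
        = |log ((cyclotomic r ℝ).eval (Q ^ k)) - r.totient * log (Q ^ k)| := by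
          rw [heval, htot, log_pow]; push_cast; ring_nf
    _ < -log (1 - (Q ^ k)⁻¹) :=
          (Nat.squarefree_prod_primeFactors n).abs_log_cyclotomic_eval_sub_lt hr1 (hQ.trans hQk)
    _ ≤ -log (1 - Q⁻¹) := by
          have hQinv : Q⁻¹ < 1 := inv_lt_one_of_one_lt₀ (by linarith)
          gcongr

/-- For every integer `n ≥ 2` and every integer `q ≥ 2`,
`(1 - 1/q) * q^φ(n) < Φ_n(q) < (1 - 1/q)⁻¹ * q^φ(n)`. -/
theorem cyclotomic_eval_bounds (n : ℕ) (hn : 2 ≤ n) (q : ℤ) (hq : 2 ≤ q) :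
    (1 - (q : ℝ)⁻¹) * (q : ℝ) ^ n.totient <
      (Polynomial.cyclotomic n ℝ).eval (q : ℝ) ∧
    (Polynomial.cyclotomic n ℝ).eval (q : ℝ) <
      (1 - (q : ℝ)⁻¹)⁻¹ * (q : ℝ) ^ n.totient := by
  have hQ : (2 : ℝ) ≤ q := by exact_mod_cast hq
  have h := abs_log_cyclotomic_eval_sub_lt hn hQ
  rw [← log_pow] at h
  exact mul_lt_and_lt_inv_mul_of_abs_log_sub_lt (cyclotomic_pos' n (by linarith)) (by positivity)
    (sub_pos.mpr (inv_lt_one_of_one_lt₀ (by linarith))) h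
end

section
/- If m is an odd positive integer, then either Φ_m(q) < Φ_{2m}(q) holds for all integers q ≥ 2, or Φ_{2m}(q) < Φ_m(q) holds for all integers q ≥ 2. -/
/-!
Write `m = r * k` with `r = rad m`. Since `k` has no prime factors outside `r`, `Φ_m(q) = Φ_r(q^k)`
and `Φ_{2m}(q) = Φ_{2r}(q^k)`, so it suffices to treat squarefree odd `r` at real points `Q ≥ 2`.
Möbius inversion of `x^n - 1 = ∏_{d ∣ n} Φ_d(x)`, together with `Φ_r(x²) = Φ_r(x) Φ_{2r}(x)`, gives
  `μ(r) (log Φ_{2r}(Q) - log Φ_r(Q)) = ∑_{b ∣ r} μ(r) μ(r/b) log ((Q^b + 1) / (Q^b - 1))`.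
The term `b = 1` is at least `2 / (Q + 1)`, while the remaining terms have `b ≥ 3` and add up to at
most `16 / (7 Q² (Q - 1))`, which is smaller. So the sign of `μ(rad m)` alone decides which of
`Φ_m(q)`, `Φ_{2m}(q)` is larger, whatever `q ≥ 2`.
-/

open Polynomial Real UniqueFactorizationMonoid
open ArithmeticFunction hiding log
open scoped ArithmeticFunction.Moebius ArithmeticFunction.Omega

theorem Polynomial.cyclotomic_mul_eq_expand (R : Type*) [CommRing R] {n k : ℕ} (hk : k ≠ 0)
    (hkn : k.primeFactors ⊆ n.primeFactors) :
    cyclotomic (n * k) R = expand R k (cyclotomic n R) := by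
  induction k using induction_on_primes with
  | zero => exact absurd rfl hk
  | one => simp
  | prime_mul p a hp ih =>
    have ha : a ≠ 0 := right_ne_zero_of_mul hk
    rw [Nat.primeFactors_mul hp.ne_zero ha, Finset.union_subset_iff, hp.primeFactors,
      Finset.singleton_subset_iff] at hkn
    have hpn : p ∣ n * a := (Nat.dvd_of_mem_primeFactors hkn.1).mul_right a
    rw [mul_comm p, ← mul_assoc, ← cyclotomic_expand_eq_cyclotomic hp hpn, ih ha hkn.2,
      ← expand_mul, mul_comm]

theorem Real.log_eval_cyclotomic {x : ℝ} (hx : 1 < x) {n : ℕ} (hn : 0 < n) :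
    log ((cyclotomic n ℝ).eval x) = ∑ i ∈ n.divisorsAntidiagonal, μ i.1 * log (x ^ i.2 - 1) := by
  refine (sum_eq_iff_sum_mul_moebius_eq (f := fun i => log ((cyclotomic i ℝ).eval x))
    (g := fun n => log (x ^ n - 1))).mp (fun n hn => ?_) n hn |>.symm
  rw [← log_prod fun i _ => (cyclotomic_pos' i hx).ne', ← eval_prod,
    prod_cyclotomic_eq_X_pow_sub_one hn]
  simp

noncomputable def logRatio (y : ℝ) : ℝ := log ((y + 1) / (y - 1))

theorem logRatio_eq {y : ℝ} (hy : 1 < y) : logRatio y = log (y ^ 2 - 1) - 2 * log (y - 1) := by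
  have h : y ^ 2 - 1 = (y + 1) * (y - 1) := by ring
  rw [logRatio, h, log_div, log_mul] <;> linarith

theorem two_div_add_one_le_logRatio {y : ℝ} (hy : 1 < y) : 2 / (y + 1) ≤ logRatio y := by
  have h := one_sub_inv_le_log_of_pos (x := (y + 1) / (y - 1)) (by apply div_pos <;> linarith)
  rw [inv_div] at h
  refine le_trans (le_of_eq ?_) h
  field_simp
  ring

theorem logRatio_pos {y : ℝ} (hy : 1 < y) : 0 < logRatio y :=
  lt_of_lt_of_le (by apply div_pos <;> linarith) (two_div_add_one_le_logRatio hy)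

theorem logRatio_le_two_div_sub_one {y : ℝ} (hy : 1 < y) : logRatio y ≤ 2 / (y - 1) := by
  have h := log_le_sub_one_of_pos (x := (y + 1) / (y - 1)) (by apply div_pos <;> linarith)
  refine h.trans (le_of_eq ?_)
  have : y - 1 ≠ 0 := by linarith
  field_simp
  ring

theorem sum_pow_le_pow_div_one_sub {x : ℝ} (hx₀ : 0 ≤ x) (hx₁ : x < 1) {N : ℕ} (S : Finset ℕ)
    (hS : ∀ b ∈ S, N ≤ b) : ∑ b ∈ S, x ^ b ≤ x ^ N / (1 - x) := by
  set M := S.sup id + 1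
  have hSM : S ⊆ Finset.Ico N M := fun b hb =>
    Finset.mem_Ico.mpr ⟨hS b hb, Nat.lt_succ_of_le (Finset.le_sup (f := id) hb)⟩
  by_cases hNM : N ≤ M
  · calc ∑ b ∈ S, x ^ b ≤ ∑ b ∈ Finset.Ico N M, x ^ b :=
          Finset.sum_le_sum_of_subset_of_nonneg hSM fun _ _ _ => by positivity
      _ = (x ^ N - x ^ M) / (1 - x) := geom_sum_Ico' hx₁.ne hNM
      _ ≤ x ^ N / (1 - x) :=
          div_le_div_of_nonneg_right (by linarith [pow_nonneg hx₀ M]) (by linarith)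
  · rw [Finset.Ico_eq_empty (by omega), Finset.subset_empty] at hSM
    simp only [hSM, Finset.sum_empty]
    exact div_nonneg (pow_nonneg hx₀ N) (by linarith)

theorem logRatio_pow_le {Q : ℝ} (hQ : 2 ≤ Q) {b : ℕ} (hb : 3 ≤ b) :
    logRatio (Q ^ b) ≤ 16 / 7 * Q⁻¹ ^ b := by
  have h8 : 8 ≤ Q ^ b := calc
    (8 : ℝ) = 2 ^ 3 := by norm_num
    _ ≤ Q ^ 3 := by gcongr
    _ ≤ Q ^ b := pow_le_pow_right₀ (by linarith) hb
  refine (logRatio_le_two_div_sub_one (by linarith)).trans ?_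
  rw [inv_pow, div_le_iff₀ (by linarith)]
  field_simp
  linarith

theorem sum_logRatio_pow_lt_logRatio {Q : ℝ} (hQ : 2 ≤ Q) (S : Finset ℕ)
    (hS : ∀ b ∈ S, 3 ≤ b) : ∑ b ∈ S, logRatio (Q ^ b) < logRatio Q := by
  have hQinv : Q⁻¹ < 1 := inv_lt_one_of_one_lt₀ (by linarith)
  calc ∑ b ∈ S, logRatio (Q ^ b) ≤ ∑ b ∈ S, 16 / 7 * Q⁻¹ ^ b :=
        Finset.sum_le_sum fun b hb => logRatio_pow_le hQ (hS b hb)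
    _ = 16 / 7 * ∑ b ∈ S, Q⁻¹ ^ b := (Finset.mul_sum _ _ _).symm
    _ ≤ 16 / 7 * (Q⁻¹ ^ 3 / (1 - Q⁻¹)) := by
        gcongr
        exact sum_pow_le_pow_div_one_sub (by positivity) hQinv S hS
    _ < 2 / (Q + 1) := by
        have hQ1 : 1 - Q⁻¹ = (Q - 1) / Q := by field_simp
        have hQ1' : 0 < Q - 1 := by linarith
        rw [hQ1, inv_pow]
        field_simp
        nlinarith [mul_le_mul hQ hQ (by norm_num) (by linarith)]
    _ ≤ logRatio Q := two_div_add_one_le_logRatio (by linarith)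

theorem logRatio_add_sum_mul_pos {Q : ℝ} (hQ : 2 ≤ Q) (S : Finset ℕ) (hS : ∀ b ∈ S, 3 ≤ b)
    (c : ℕ → ℝ) (hc : ∀ b ∈ S, |c b| ≤ 1) :
    0 < logRatio Q + ∑ b ∈ S, c b * logRatio (Q ^ b) := by
  have hterm : ∀ b ∈ S, -logRatio (Q ^ b) ≤ c b * logRatio (Q ^ b) := by
    intro b hb
    have hpos := logRatio_pos (one_lt_pow₀ (by linarith : 1 < Q) (by linarith [hS b hb] : b ≠ 0))
    have := abs_le.mp (hc b hb)
    nlinarith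
  have hsum := Finset.sum_le_sum hterm
  rw [Finset.sum_neg_distrib] at hsum
  linarith [sum_logRatio_pow_lt_logRatio hQ S hS]

theorem log_eval_cyclotomic_two_mul_sub {x : ℝ} (hx : 1 < x) {n : ℕ} (hn : Odd n) :
    log ((cyclotomic (2 * n) ℝ).eval x) - log ((cyclotomic n ℝ).eval x) =
      ∑ i ∈ n.divisorsAntidiagonal, μ i.1 * logRatio (x ^ i.2) := by
  have hexp : (cyclotomic n ℝ).eval (x ^ 2) =
      (cyclotomic (2 * n) ℝ).eval x * (cyclotomic n ℝ).eval x := by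
    rw [← expand_eval, cyclotomic_expand_eq_cyclotomic_mul Nat.prime_two
      (Nat.two_dvd_ne_zero.mpr (Nat.odd_iff.mp hn)), eval_mul, mul_comm n 2]
  have hlog : log ((cyclotomic (2 * n) ℝ).eval x) =
      log ((cyclotomic n ℝ).eval (x ^ 2)) - log ((cyclotomic n ℝ).eval x) := by
    rw [hexp, log_mul (cyclotomic_pos' _ hx).ne' (cyclotomic_pos' _ hx).ne']
    ring
  rw [hlog, log_eval_cyclotomic (one_lt_pow₀ hx two_ne_zero) hn.pos, log_eval_cyclotomic hx hn.pos,
    ← Finset.sum_sub_distrib, ← Finset.sum_sub_distrib]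
  refine Finset.sum_congr rfl fun i hi => ?_
  have hb : 1 < x ^ i.2 :=
    one_lt_pow₀ hx (Nat.pos_of_mem_divisors (Nat.snd_mem_divisors_of_mem_antidiagonal hi)).ne'
  rw [logRatio_eq hb, ← pow_mul, ← pow_mul, mul_comm i.2 2]
  ring

theorem moebius_mul_log_eval_cyclotomic_two_mul_sub_pos {Q : ℝ} (hQ : 2 ≤ Q) {r : ℕ}
    (hr : Squarefree r) (hodd : Odd r) :
    0 < μ r * (log ((cyclotomic (2 * r) ℝ).eval Q) - log ((cyclotomic r ℝ).eval Q)) := by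
  rw [log_eval_cyclotomic_two_mul_sub (by linarith) hodd,
    Nat.sum_divisorsAntidiagonal' (fun a b => (μ a : ℝ) * logRatio (Q ^ b)), Finset.mul_sum,
    ← Finset.add_sum_erase _ _ (Nat.one_mem_divisors.mpr hodd.pos.ne')]
  have hμ : (μ r : ℝ) * μ (r / 1) = 1 := by
    rw [Nat.div_one, ← sq]
    exact_mod_cast moebius_sq_eq_one_of_squarefree hr
  simp_rw [← mul_assoc]
  rw [hμ, one_mul, pow_one]
  refine logRatio_add_sum_mul_pos hQ _ (fun b hb => ?_) _ (fun b _ => ?_)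
  · obtain ⟨hb1, hb⟩ := Finset.mem_erase.mp hb
    obtain ⟨k, rfl⟩ := hodd.of_dvd_nat (Nat.dvd_of_mem_divisors hb)
    omega
  · have habs (n : ℕ) : |(μ n : ℝ)| ≤ 1 := by exact_mod_cast abs_moebius_le_one
    rw [abs_mul]
    exact mul_le_one₀ (habs r) (abs_nonneg _) (habs _)

theorem moebius_radical_mul_log_eval_cyclotomic_two_mul_sub_pos {x : ℝ} (hx : 2 ≤ x) {m : ℕ}
    (hm : Odd m) :
    0 < μ (radical m) *
      (log ((cyclotomic (2 * m) ℝ).eval x) - log ((cyclotomic m ℝ).eval x)) := by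
  set r := radical m
  obtain ⟨k, hk⟩ : r ∣ m := radical_dvd_self
  have hk0 : k ≠ 0 := by
    rintro rfl
    exact hm.pos.ne' (by simpa using hk)
  have hkr : k.primeFactors ⊆ r.primeFactors := by
    rw [Nat.primeFactors_radical]
    exact Nat.primeFactors_mono (Dvd.intro_left _ hk.symm) hm.pos.ne'
  have hk2r : k.primeFactors ⊆ (2 * r).primeFactors :=
    hkr.trans (Nat.primeFactors_mono (dvd_mul_left r 2) (by positivity))
  rw [hk, ← mul_assoc, cyclotomic_mul_eq_expand ℝ hk0 hkr, cyclotomic_mul_eq_expand ℝ hk0 hk2r,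
    expand_eval, expand_eval]
  exact moebius_mul_log_eval_cyclotomic_two_mul_sub_pos
    (hx.trans (le_self_pow₀ (by linarith) hk0)) squarefree_radical (hm.of_dvd_nat radical_dvd_self)

theorem eval_cyclotomic_lt_iff_log_lt {q : ℤ} (hq : 1 < q) (a b : ℕ) :
    (cyclotomic a ℤ).eval q < (cyclotomic b ℤ).eval q ↔
      log ((cyclotomic a ℝ).eval (q : ℝ)) < log ((cyclotomic b ℝ).eval (q : ℝ)) := by
  have hq' : (1 : ℝ) < q := by exact_mod_cast hq
  rw [log_lt_log_iff (cyclotomic_pos' a hq') (cyclotomic_pos' b hq'), ← Int.cast_lt (R := ℝ)]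
  simp only [← eq_intCast (Int.castRingHom ℝ), ← cyclotomic.eval_apply]

theorem cyclotomic_m_two_m_comparable_general (m : ℕ) (hodd : Odd m) :
    (∀ q : ℤ, 2 ≤ q →
      (Polynomial.cyclotomic m ℤ).eval q < (Polynomial.cyclotomic (2 * m) ℤ).eval q) ∨
    (∀ q : ℤ, 2 ≤ q →
      (Polynomial.cyclotomic (2 * m) ℤ).eval q < (Polynomial.cyclotomic m ℤ).eval q) := by
  have hsign (q : ℤ) (hq : 2 ≤ q) := moebius_radical_mul_log_eval_cyclotomic_two_mul_sub_pos
    (x := q) (by exact_mod_cast hq) hodd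
  rcases neg_one_pow_eq_or ℤ (Ω (radical m)) with h | h <;>
    rw [← moebius_apply_of_squarefree squarefree_radical] at h
  · refine Or.inl fun q hq => (eval_cyclotomic_lt_iff_log_lt (by omega) _ _).2 ?_
    have := hsign q hq
    rw [h, Int.cast_one, one_mul] at this
    linarith
  · refine Or.inr fun q hq => (eval_cyclotomic_lt_iff_log_lt (by omega) _ _).2 ?_
    have := hsign q hq
    rw [h, Int.cast_neg, Int.cast_one, neg_one_mul] at this
    linarith

/-- If `m` is an odd positive integer, then either `Φ_m(q) < Φ_{2m}(q)` for all
integers `q ≥ 2`, or `Φ_{2m}(q) < Φ_m(q)` for all integers `q ≥ 2`. -/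
theorem cyclotomic_m_two_m_comparable (m : ℕ) (hm : 0 < m) (hodd : Odd m) :
    (∀ q : ℤ, 2 ≤ q →
      (Polynomial.cyclotomic m ℤ).eval q < (Polynomial.cyclotomic (2 * m) ℤ).eval q) ∨
    (∀ q : ℤ, 2 ≤ q →
      (Polynomial.cyclotomic (2 * m) ℤ).eval q < (Polynomial.cyclotomic m ℤ).eval q) :=
  cyclotomic_m_two_m_comparable_general m hodd
end

section
/- Let m be an odd integer with m ≥ 3 and let m₀ be the radical (largest squarefree divisor) of m. If the Möbius function satisfies μ(m₀) = 1, then for every integer q ≥ 2 one has (1 - 1/q) · q^{φ(m)} < Φ_m(q) < q^{φ(m)} < Φ_{2m}(q) < (1 - 1/q)^{-1} · q^{φ(m)}. -/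
/-!
Möbius inversion of `X ^ n - 1 = ∏_{d ∣ n} Φ_d` gives
`q^(-φ m) Φ_m(q) = ∏_{d ∣ m} (1 - q^(-m/d))^μ(d)`, and `Φ_{2m}(X) Φ_m(X) = Φ_m(X²)` gives the same
with `1 + q^(-m/d)`. Only the divisors of the radical `m₀` contribute, and since `μ m₀ = 1` the
substitution `d ↦ m₀ / d` preserves `μ`; with `w = q^(-m/m₀) ≤ 1/q` both products become
`∏_{e ∣ m₀} (1 ∓ w^e)^μ(e)`. The factor `e = 1` dominates: every `e` with `μ e = -1` is at least
the least prime `p ≥ 3` of `m`, and every other `e` with `μ e = 1` is composite, hence `≥ p²`.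
With `∏ (1 - tᵢ) ≥ 1 - ∑ tᵢ` and geometric tails, the first product lies strictly between
`1 - w` and `1`, the second strictly between `1` and `(1 - w)⁻¹`.
-/

open Finset Polynomial ArithmeticFunction UniqueFactorizationMonoid
open scoped ArithmeticFunction.Moebius

theorem prod_divisors_zpow_moebius_eq_prod_divisors_radical {G : Type*} [DivisionCommMonoid G]
    {n : ℕ} (hn : n ≠ 0) (f : ℕ → G) :
    ∏ d ∈ n.divisors, f d ^ μ d = ∏ d ∈ (radical n).divisors, f d ^ μ d := by
  refine (prod_subset (Nat.divisors_subset_of_dvd hn radical_dvd_self) fun d hd hdr => ?_).symm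
  have hsf : ¬ Squarefree d := fun hsf => hdr <| Nat.mem_divisors.2
    ⟨(dvd_radical_iff hsf.isRadical hn).2 (Nat.dvd_of_mem_divisors hd), radical_ne_zero⟩
  rw [moebius_eq_zero_of_not_squarefree hsf, zpow_zero]

theorem moebius_div_eq_of_moebius_eq_one {n d : ℕ} (hn : Squarefree n) (hμ : μ n = 1)
    (hd : d ∣ n) : μ (n / d) = μ d := by
  have hmul : d * (n / d) = n := Nat.mul_div_cancel' hd
  have hcop : d.Coprime (n / d) := Nat.coprime_of_squarefree_mul (by rwa [hmul])
  have h1 : μ d * μ (n / d) = 1 := by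
    rw [← isMultiplicative_moebius.map_mul_of_coprime hcop, hmul, hμ]
  rcases Int.mul_eq_one_iff_eq_one_or_neg_one.1 h1 with ⟨ha, hb⟩ | ⟨ha, hb⟩ <;> rw [ha, hb]

theorem prod_divisors_zpow_moebius_eq_div {G : Type*} [DivisionCommMonoid G] {n : ℕ}
    (hn : Squarefree n) (f : ℕ → G) :
    ∏ d ∈ n.divisors, f d ^ μ d =
      (∏ d ∈ n.divisors with μ d = 1, f d) / ∏ d ∈ n.divisors with μ d = -1, f d := by
  rw [← prod_filter_mul_prod_filter_not n.divisors (μ · = 1), div_eq_mul_inv, ← prod_inv_distrib]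
  have hneg : ∀ d ∈ n.divisors, ¬ μ d = 1 ↔ μ d = -1 := fun d hd => by
    have := moebius_ne_zero_iff_eq_or.1 (moebius_ne_zero_iff_squarefree.2
      (hn.squarefree_of_dvd (Nat.dvd_of_mem_divisors hd)))
    omega
  rw [filter_congr hneg]
  congr 1 <;> refine prod_congr rfl fun d hd => ?_ <;> rw [(mem_filter.1 hd).2]
  · exact zpow_one _
  · exact zpow_neg_one _

theorem prod_divisors_zpow_moebius_eq_div_of_moebius_radical_eq_one {G : Type*}
    [DivisionCommMonoid G] {n : ℕ} (hn : n ≠ 0) (hμ : μ (radical n) = 1) (f : ℕ → G) :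
    ∏ d ∈ n.divisors, f (n / d) ^ μ d =
      (∏ e ∈ (radical n).divisors with μ e = 1, f (n / radical n * e)) /
        ∏ e ∈ (radical n).divisors with μ e = -1, f (n / radical n * e) := by
  rw [prod_divisors_zpow_moebius_eq_prod_divisors_radical hn fun d => f (n / d),
    ← prod_divisors_zpow_moebius_eq_div squarefree_radical,
    ← Nat.prod_div_divisors (radical n) fun e => f (n / radical n * e) ^ μ e]
  refine prod_congr rfl fun d hd => ?_
  have hd : d ∣ radical n := Nat.dvd_of_mem_divisors hd
  rw [moebius_div_eq_of_moebius_eq_one squarefree_radical hμ hd, ← Nat.mul_div_assoc _ hd,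
    Nat.div_mul_cancel radical_dvd_self]

theorem cyclotomic_eval_inv_mul_pow_totient {K : Type*} [Field K] {x : K} (hx0 : x ≠ 0)
    (hx : ∀ k, 0 < k → x ^ k ≠ 1) {n : ℕ} (hn : 0 < n) :
    (cyclotomic n K).eval x⁻¹ * x ^ n.totient = ∏ d ∈ n.divisors, (1 - x ^ (n / d)) ^ μ d := by
  have hprod : ∀ k > 0,
      ∏ d ∈ k.divisors, (cyclotomic d K).eval x⁻¹ * x ^ d.totient = 1 - x ^ k := by
    intro k hk
    rw [prod_mul_distrib, ← eval_prod, prod_cyclotomic_eq_X_pow_sub_one hk, prod_pow_eq_pow_sum,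
      Nat.sum_totient, eval_sub, eval_pow, eval_X, eval_one, sub_mul, inv_pow,
      inv_mul_cancel₀ (pow_ne_zero k hx0), one_mul]
  have hg : ∀ k, 0 < k → 1 - x ^ k ≠ 0 := fun k hk => sub_ne_zero.2 (hx k hk).symm
  have hf : ∀ k, 0 < k → (cyclotomic k K).eval x⁻¹ * x ^ k.totient ≠ 0 := fun k hk =>
    prod_ne_zero_iff.1 (hprod k hk ▸ hg k hk) k (Nat.mem_divisors_self k hk.ne')
  rw [← (prod_eq_iff_prod_pow_moebius_eq_of_nonzero hf hg).1 hprod n hn,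
    Nat.prod_divisorsAntidiagonal fun d e => (1 - x ^ e) ^ μ d]

theorem cyclotomic_two_mul_eval_inv_mul_pow_totient {K : Type*} [Field K] {x : K} (hx0 : x ≠ 0)
    (hx : ∀ k, 0 < k → x ^ k ≠ 1) {n : ℕ} (hn : 0 < n) (hodd : Odd n) :
    (cyclotomic (2 * n) K).eval x⁻¹ * x ^ n.totient =
      ∏ d ∈ n.divisors, (1 + x ^ (n / d)) ^ μ d := by
  have hx2 : ∀ k, 0 < k → (x ^ 2) ^ k ≠ 1 := fun k hk => by
    rw [← pow_mul]; exact hx _ (by omega)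
  have hsq := cyclotomic_eval_inv_mul_pow_totient (pow_ne_zero 2 hx0) hx2 hn
  have hexp := congrArg (eval x⁻¹)
    (cyclotomic_expand_eq_cyclotomic_mul Nat.prime_two hodd.not_two_dvd_nat K)
  rw [expand_eval, eval_mul, mul_comm n 2] at hexp
  rw [← inv_pow, hexp, pow_right_comm, sq, mul_mul_mul_comm,
    cyclotomic_eval_inv_mul_pow_totient hx0 hx hn] at hsq
  have hne : ∏ d ∈ n.divisors, (1 - x ^ (n / d)) ^ μ d ≠ 0 :=
    prod_ne_zero_iff.2 fun d hd => zpow_ne_zero _ (sub_ne_zero.2 (hx _ (Nat.div_pos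
      (Nat.divisor_le hd) (Nat.pos_of_mem_divisors hd))).symm)
  refine mul_right_cancel₀ hne ?_
  rw [hsq, ← prod_mul_distrib]
  refine prod_congr rfl fun d _ => ?_
  rw [← mul_zpow, ← pow_mul, pow_mul']
  ring_nf

theorem cyclotomic_eval_eq_pow_totient_mul_of_moebius_radical_eq_one {m : ℕ} (hm : m ≠ 0)
    (hμ : μ (radical m) = 1) {Q : ℝ} (hQ : 1 < Q) :
    (cyclotomic m ℝ).eval Q = Q ^ m.totient *
      ((∏ e ∈ (radical m).divisors with μ e = 1, (1 - (Q⁻¹ ^ (m / radical m)) ^ e)) /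
        ∏ e ∈ (radical m).divisors with μ e = -1, (1 - (Q⁻¹ ^ (m / radical m)) ^ e)) := by
  have hx : ∀ k, 0 < k → Q⁻¹ ^ k ≠ 1 := fun k hk =>
    (pow_lt_one₀ (by positivity) (inv_lt_one_of_one_lt₀ hQ) hk.ne').ne
  have h := cyclotomic_eval_inv_mul_pow_totient (inv_ne_zero (by positivity)) hx
    (Nat.pos_of_ne_zero hm)
  rw [inv_inv, prod_divisors_zpow_moebius_eq_div_of_moebius_radical_eq_one hm hμ
    fun k => 1 - Q⁻¹ ^ k] at h
  simp only [pow_mul] at h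
  rw [← h, mul_left_comm, ← mul_pow, mul_inv_cancel₀ (by positivity), one_pow, mul_one]

theorem cyclotomic_two_mul_eval_eq_pow_totient_mul_of_moebius_radical_eq_one {m : ℕ}
    (hm : m ≠ 0) (hodd : Odd m) (hμ : μ (radical m) = 1) {Q : ℝ} (hQ : 1 < Q) :
    (cyclotomic (2 * m) ℝ).eval Q = Q ^ m.totient *
      ((∏ e ∈ (radical m).divisors with μ e = 1, (1 + (Q⁻¹ ^ (m / radical m)) ^ e)) /
        ∏ e ∈ (radical m).divisors with μ e = -1, (1 + (Q⁻¹ ^ (m / radical m)) ^ e)) := by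
  have hx : ∀ k, 0 < k → Q⁻¹ ^ k ≠ 1 := fun k hk =>
    (pow_lt_one₀ (by positivity) (inv_lt_one_of_one_lt₀ hQ) hk.ne').ne
  have h := cyclotomic_two_mul_eval_inv_mul_pow_totient (inv_ne_zero (by positivity)) hx
    (Nat.pos_of_ne_zero hm) hodd
  rw [inv_inv, prod_divisors_zpow_moebius_eq_div_of_moebius_radical_eq_one hm hμ
    fun k => 1 + Q⁻¹ ^ k] at h
  simp only [pow_mul] at h
  rw [← h, mul_left_comm, ← mul_pow, mul_inv_cancel₀ (by positivity), one_pow, mul_one]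

theorem mem_divisors_radical_moebius_eq_neg_one_of_prime {n p : ℕ} (hn : n ≠ 0) (hp : p.Prime)
    (hpn : p ∣ n) : p ∈ {e ∈ (radical n).divisors | μ e = -1} :=
  mem_filter.2 ⟨Nat.mem_divisors.2 ⟨(dvd_radical_iff hp.prime.squarefree.isRadical hn).2 hpn,
    radical_ne_zero⟩, moebius_apply_prime hp⟩

theorem three_le_of_mem_divisors_radical_moebius_eq_neg_one {n e : ℕ} (hodd : Odd n)
    (he : e ∈ {e ∈ (radical n).divisors | μ e = -1}) : 3 ≤ e := by
  obtain ⟨hd, hμ⟩ := mem_filter.1 he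
  have he1 : e ≠ 1 := by rintro rfl; simp at hμ
  have hodd_e : Odd e := hodd.of_dvd_nat ((Nat.dvd_of_mem_divisors hd).trans radical_dvd_self)
  have he0 : e ≠ 0 := (Nat.pos_of_mem_divisors hd).ne'
  obtain ⟨k, rfl⟩ := hodd_e
  omega

theorem minFac_sq_le_of_mem_divisors_radical_moebius_eq_one {n e : ℕ}
    (he : e ∈ {e ∈ (radical n).divisors | μ e = 1}) (he1 : e ≠ 1) : n.minFac ^ 2 ≤ e := by
  obtain ⟨hd, hμ⟩ := mem_filter.1 he
  have hnp : ¬ e.Prime := fun hp => by simp [moebius_apply_prime hp] at hμ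
  calc n.minFac ^ 2 ≤ e.minFac ^ 2 := by
        gcongr
        exact Nat.minFac_le_of_dvd (Nat.minFac_prime he1).two_le
          (e.minFac_dvd.trans ((Nat.dvd_of_mem_divisors hd).trans radical_dvd_self))
    _ ≤ e := Nat.minFac_sq_le_self (Nat.pos_of_mem_divisors hd) hnp

theorem one_sub_sum_le_prod_one_sub {ι R : Type*} [LinearOrder ι] [CommRing R] [PartialOrder R]
    [IsOrderedRing R] (s : Finset ι) {f : ι → R} (h0 : ∀ i ∈ s, 0 ≤ f i)
    (h1 : ∀ i ∈ s, f i ≤ 1) : 1 - ∑ i ∈ s, f i ≤ ∏ i ∈ s, (1 - f i) := by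
  rw [prod_one_sub_ordered]
  gcongr with i hi
  refine mul_le_of_le_one_right (h0 i hi) (prod_le_one (fun j hj => ?_) fun j hj => ?_)
  · exact sub_nonneg.2 (h1 j (mem_filter.1 hj).1)
  · exact sub_le_self _ (h0 j (mem_filter.1 hj).1)

theorem prod_one_add_mul_prod_one_sub_le_one {ι R : Type*} [CommRing R] [PartialOrder R]
    [IsOrderedRing R] (s : Finset ι) {f : ι → R} (h0 : ∀ i ∈ s, 0 ≤ f i)
    (h1 : ∀ i ∈ s, f i ≤ 1) : (∏ i ∈ s, (1 + f i)) * ∏ i ∈ s, (1 - f i) ≤ 1 := by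
  rw [← prod_mul_distrib]
  refine prod_le_one (fun i hi => ?_) fun i hi => ?_
  · exact mul_nonneg (add_nonneg zero_le_one (h0 i hi)) (sub_nonneg.2 (h1 i hi))
  · rw [← sq_sub_sq, one_pow]
    exact sub_le_self _ (pow_nonneg (h0 i hi) 2)

theorem prod_one_sub_le_of_mem {ι R : Type*} [CommRing R] [PartialOrder R] [IsOrderedRing R]
    {s : Finset ι} {f : ι → R} (h0 : ∀ i ∈ s, 0 ≤ f i) (h1 : ∀ i ∈ s, f i ≤ 1) {a : ι}
    (ha : a ∈ s) : ∏ i ∈ s, (1 - f i) ≤ 1 - f a := by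
  simpa using prod_le_prod_of_subset_of_le_one (singleton_subset_iff.2 ha)
    (fun i hi => sub_nonneg.2 (h1 i hi)) fun i hi _ => sub_le_self _ (h0 i hi)

theorem one_add_le_prod_one_add_of_mem {ι R : Type*} [CommRing R] [PartialOrder R]
    [IsOrderedRing R] {s : Finset ι} {f : ι → R} (h0 : ∀ i ∈ s, 0 ≤ f i) {a : ι} (ha : a ∈ s) :
    1 + f a ≤ ∏ i ∈ s, (1 + f i) := by
  simpa using prod_le_prod_of_subset_of_one_le (singleton_subset_iff.2 ha)
    (fun i hi => add_nonneg zero_le_one (h0 i (mem_singleton.1 hi ▸ ha)))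
    fun i hi _ => le_add_of_nonneg_right (h0 i hi)

theorem sum_pow_le_pow_div_one_sub_s4 {K : Type*} [Field K] [LinearOrder K] [IsStrictOrderedRing K]
    {w : K} (hw0 : 0 ≤ w) (hw1 : w < 1) {s : Finset ℕ} {L : ℕ} (hs : ∀ e ∈ s, L ≤ e) :
    ∑ e ∈ s, w ^ e ≤ w ^ L / (1 - w) :=
  calc ∑ e ∈ s, w ^ e ≤ ∑ e ∈ Ico L (s.sup id + 1), w ^ e :=
        sum_le_sum_of_subset_of_nonneg
          (fun e he => mem_Ico.2 ⟨hs e he, Nat.lt_succ_of_le (le_sup (f := id) he)⟩)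
          fun e _ _ => pow_nonneg hw0 e
    _ ≤ w ^ L / (1 - w) := geom_sum_Ico_le_of_lt_one hw0 hw1

theorem one_sub_two_mul_pow_le_prod_one_sub_pow {w : ℝ} (hw0 : 0 ≤ w) (hw : w ≤ 1 / 2)
    {s : Finset ℕ} {L : ℕ} (hs : ∀ e ∈ s, L ≤ e) : 1 - 2 * w ^ L ≤ ∏ e ∈ s, (1 - w ^ e) := by
  have hsum := sum_pow_le_pow_div_one_sub_s4 hw0 (by linarith) hs
  have hgeom : w ^ L / (1 - w) ≤ 2 * w ^ L := by
    rw [div_le_iff₀ (by linarith)]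
    nlinarith [pow_nonneg hw0 L]
  calc 1 - 2 * w ^ L ≤ 1 - ∑ e ∈ s, w ^ e := by linarith
    _ ≤ ∏ e ∈ s, (1 - w ^ e) := one_sub_sum_le_prod_one_sub s (fun e _ => pow_nonneg hw0 e)
        fun e _ => pow_le_one₀ hw0 (by linarith)

theorem one_sub_mul_le_prod_one_sub_pow {w : ℝ} (hw0 : 0 ≤ w) (hw : w ≤ 1 / 2) {A : Finset ℕ}
    {L : ℕ} (hA1 : 1 ∈ A) (hA : ∀ e ∈ A, e ≠ 1 → L ≤ e) :
    (1 - w) * (1 - 2 * w ^ L) ≤ ∏ e ∈ A, (1 - w ^ e) := by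
  rw [← mul_prod_erase A _ hA1, pow_one]
  gcongr
  · linarith
  · exact one_sub_two_mul_pow_le_prod_one_sub_pow hw0 hw fun e he =>
      hA e (mem_erase.1 he).2 (mem_erase.1 he).1

section ProdRatio

variable {w : ℝ} {A B : Finset ℕ}

theorem two_mul_pow_add_two_lt_pow (hw0 : 0 < w) (hw : w ≤ 1 / 2) (p : ℕ) :
    2 * w ^ (p + 2) < w ^ p := by
  have hw2 : w ^ 2 ≤ 1 / 4 := by nlinarith
  rw [pow_add]
  nlinarith [mul_le_mul_of_nonneg_left hw2 (pow_pos hw0 p).le, pow_pos hw0 p]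

theorem two_mul_pow_add_two_mul_one_add_pow_lt_pow (hw0 : 0 < w) (hw : w ≤ 1 / 2) {p : ℕ}
    (hp : p ≠ 0) : 2 * w ^ (p + 2) * (1 + w ^ p) < w ^ p := by
  have hw2 : w ^ 2 ≤ 1 / 4 := by nlinarith
  have hwp : w ^ p ≤ w := pow_le_of_le_one hw0.le (by linarith) hp
  have h := mul_le_mul_of_nonneg_left hw2 (pow_pos hw0 p).le
  rw [pow_add]
  nlinarith [mul_le_mul_of_nonneg_left h (pow_pos hw0 p).le, pow_pos hw0 p]

theorem prod_one_sub_pow_div_lt_one (hw0 : 0 < w) (hw : w ≤ 1 / 2) (hA1 : 1 ∈ A)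
    (hB : ∀ e ∈ B, 3 ≤ e) : (∏ e ∈ A, (1 - w ^ e)) / ∏ e ∈ B, (1 - w ^ e) < 1 := by
  have hPA := prod_one_sub_le_of_mem (fun e _ => pow_nonneg hw0.le e)
    (fun e _ => pow_le_one₀ hw0.le (by linarith)) hA1
  have hPB := one_sub_two_mul_pow_le_prod_one_sub_pow hw0.le hw hB
  have hw3 : 2 * w ^ 3 < w := by simpa using two_mul_pow_add_two_lt_pow hw0 hw 1
  rw [pow_one] at hPA
  rw [div_lt_one (by linarith)]
  linarith

theorem one_sub_lt_prod_one_sub_pow_div (hw0 : 0 < w) (hw : w ≤ 1 / 2) {p : ℕ} (hA1 : 1 ∈ A)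
    (hA : ∀ e ∈ A, e ≠ 1 → p + 2 ≤ e) (hB : ∀ e ∈ B, 3 ≤ e) (hpB : p ∈ B) :
    1 - w < (∏ e ∈ A, (1 - w ^ e)) / ∏ e ∈ B, (1 - w ^ e) := by
  have hPA := one_sub_mul_le_prod_one_sub_pow hw0.le hw hA1 hA
  have hPB := prod_one_sub_le_of_mem (fun e _ => pow_nonneg hw0.le e)
    (fun e _ => pow_le_one₀ hw0.le (by linarith)) hpB
  have hPB0 : 0 < ∏ e ∈ B, (1 - w ^ e) :=
    prod_pos fun e he => sub_pos.2 (pow_lt_one₀ hw0.le (by linarith) (by linarith [hB e he]))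
  have hwp := two_mul_pow_add_two_lt_pow hw0 hw p
  rw [lt_div_iff₀ hPB0]
  nlinarith

theorem one_lt_prod_one_add_pow_div (hw0 : 0 < w) (hw : w ≤ 1 / 2) (hA1 : 1 ∈ A)
    (hB : ∀ e ∈ B, 3 ≤ e) : 1 < (∏ e ∈ A, (1 + w ^ e)) / ∏ e ∈ B, (1 + w ^ e) := by
  have hQA := one_add_le_prod_one_add_of_mem (fun e _ => pow_nonneg hw0.le e) hA1
  have hQPB := prod_one_add_mul_prod_one_sub_le_one B (fun e _ => pow_nonneg hw0.le e)
    fun e _ => pow_le_one₀ hw0.le (by linarith)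
  have hPB := one_sub_two_mul_pow_le_prod_one_sub_pow hw0.le hw hB
  have hQB0 : 0 < ∏ e ∈ B, (1 + w ^ e) := prod_pos fun e _ => by positivity
  have hw3 : 2 * w ^ 3 * (1 + w) < w := by
    simpa using two_mul_pow_add_two_mul_one_add_pow_lt_pow hw0 hw one_ne_zero
  rw [pow_one] at hQA
  have hw3' : 0 < 1 - 2 * w ^ 3 := by nlinarith
  rw [one_lt_div hQB0]
  refine lt_of_mul_lt_mul_right ?_ hw3'.le
  calc (∏ e ∈ B, (1 + w ^ e)) * (1 - 2 * w ^ 3)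
      ≤ (∏ e ∈ B, (1 + w ^ e)) * ∏ e ∈ B, (1 - w ^ e) := by gcongr
    _ ≤ 1 := hQPB
    _ < (1 + w) * (1 - 2 * w ^ 3) := by nlinarith
    _ ≤ (∏ e ∈ A, (1 + w ^ e)) * (1 - 2 * w ^ 3) := by gcongr

theorem prod_one_add_pow_div_lt_inv_one_sub (hw0 : 0 < w) (hw : w ≤ 1 / 2) {p : ℕ}
    (hA1 : 1 ∈ A) (hA : ∀ e ∈ A, e ≠ 1 → p + 2 ≤ e) (hB : ∀ e ∈ B, 3 ≤ e) (hpB : p ∈ B) :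
    (∏ e ∈ A, (1 + w ^ e)) / ∏ e ∈ B, (1 + w ^ e) < (1 - w)⁻¹ := by
  have hPA := one_sub_mul_le_prod_one_sub_pow hw0.le hw hA1 hA
  have hQPA := prod_one_add_mul_prod_one_sub_le_one A (fun e _ => pow_nonneg hw0.le e)
    fun e _ => pow_le_one₀ hw0.le (by linarith)
  have hQB := one_add_le_prod_one_add_of_mem (fun e _ => pow_nonneg hw0.le e) hpB
  have hQB0 : 0 < ∏ e ∈ B, (1 + w ^ e) := prod_pos fun e _ => by positivity
  have hwp := two_mul_pow_add_two_mul_one_add_pow_lt_pow hw0 hw (p := p) (by linarith [hB p hpB])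
  have hwp0 : 0 < 1 - 2 * w ^ (p + 2) := by
    nlinarith [two_mul_pow_add_two_lt_pow hw0 hw p,
      pow_le_one₀ hw0.le (by linarith : w ≤ 1) (n := p)]
  rw [div_lt_iff₀ hQB0, inv_mul_eq_div, lt_div_iff₀ (by linarith)]
  refine lt_of_mul_lt_mul_right ?_ hwp0.le
  calc (∏ e ∈ A, (1 + w ^ e)) * (1 - w) * (1 - 2 * w ^ (p + 2))
      ≤ (∏ e ∈ A, (1 + w ^ e)) * ∏ e ∈ A, (1 - w ^ e) := by
        rw [mul_assoc]; gcongr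
    _ ≤ 1 := hQPA
    _ < (1 + w ^ p) * (1 - 2 * w ^ (p + 2)) := by nlinarith
    _ ≤ (∏ e ∈ B, (1 + w ^ e)) * (1 - 2 * w ^ (p + 2)) := by gcongr

end ProdRatio

theorem radical_divisors_prod_ratio_bounds {m : ℕ} (hm : m ≠ 1) (hodd : Odd m) {w : ℝ} (hw0 : 0 < w)
    (hw : w ≤ 1 / 2) :
    let A := {e ∈ (radical m).divisors | μ e = 1}
    let B := {e ∈ (radical m).divisors | μ e = -1}
    1 - w < (∏ e ∈ A, (1 - w ^ e)) / ∏ e ∈ B, (1 - w ^ e) ∧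
      (∏ e ∈ A, (1 - w ^ e)) / ∏ e ∈ B, (1 - w ^ e) < 1 ∧
      1 < (∏ e ∈ A, (1 + w ^ e)) / ∏ e ∈ B, (1 + w ^ e) ∧
      (∏ e ∈ A, (1 + w ^ e)) / ∏ e ∈ B, (1 + w ^ e) < (1 - w)⁻¹ := by
  intro A B
  have hA1 : 1 ∈ A := mem_filter.2 ⟨Nat.one_mem_divisors.2 radical_ne_zero, moebius_apply_one⟩
  have hB : ∀ e ∈ B, 3 ≤ e := fun e he =>
    three_le_of_mem_divisors_radical_moebius_eq_neg_one hodd he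
  have hpB : m.minFac ∈ B := mem_divisors_radical_moebius_eq_neg_one_of_prime
    (by rintro rfl; simp at hodd) (Nat.minFac_prime hm) m.minFac_dvd
  have hA : ∀ e ∈ A, e ≠ 1 → m.minFac + 2 ≤ e := fun e he he1 => by
    nlinarith [hB _ hpB, minFac_sq_le_of_mem_divisors_radical_moebius_eq_one he he1]
  exact ⟨one_sub_lt_prod_one_sub_pow_div hw0 hw hA1 hA hB hpB,
    prod_one_sub_pow_div_lt_one hw0 hw hA1 hB, one_lt_prod_one_add_pow_div hw0 hw hA1 hB,
    prod_one_add_pow_div_lt_inv_one_sub hw0 hw hA1 hA hB hpB⟩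

/-- Let `m ≥ 3` be odd with radical `m₀` (the largest squarefree divisor,
`m₀ = ∏ p ∈ m.primeFactors, p`). If `μ(m₀) = 1`, then for every integer `q ≥ 2`,
`(1 - 1/q) q^φ(m) < Φ_m(q) < q^φ(m) < Φ_{2m}(q) < (1 - 1/q)⁻¹ q^φ(m)`. -/
theorem cyclotomic_chain_of_moebius_radical_eq_one (m : ℕ) (hm : 3 ≤ m) (hodd : Odd m)
    (hmu : ArithmeticFunction.moebius (∏ p ∈ m.primeFactors, p) = 1)
    (q : ℤ) (hq : 2 ≤ q) :
    (1 - (q : ℝ)⁻¹) * (q : ℝ) ^ m.totient <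
      (Polynomial.cyclotomic m ℝ).eval (q : ℝ) ∧
    (Polynomial.cyclotomic m ℝ).eval (q : ℝ) < (q : ℝ) ^ m.totient ∧
    (q : ℝ) ^ m.totient < (Polynomial.cyclotomic (2 * m) ℝ).eval (q : ℝ) ∧
    (Polynomial.cyclotomic (2 * m) ℝ).eval (q : ℝ) <
      (1 - (q : ℝ)⁻¹)⁻¹ * (q : ℝ) ^ m.totient := by
  rw [← Nat.radical_eq_prod_primeFactors] at hmu
  have hm0 : m ≠ 0 := by omega
  have hQ : (2 : ℝ) ≤ q := by exact_mod_cast hq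
  have hx : (q : ℝ)⁻¹ ≤ 1 / 2 := by rw [one_div]; exact inv_anti₀ two_pos hQ
  set w := (q : ℝ)⁻¹ ^ (m / radical m)
  have hw0 : 0 < w := by positivity
  have hwx : w ≤ (q : ℝ)⁻¹ := pow_le_of_le_one (by positivity) (by linarith)
    (Nat.div_pos (Nat.le_of_dvd (by omega) radical_dvd_self) (Nat.radical_pos m)).ne'
  obtain ⟨h1, h2, h3, h4⟩ := radical_divisors_prod_ratio_bounds (by omega) hodd hw0 (hwx.trans hx)
  have hQφ : (0 : ℝ) < (q : ℝ) ^ m.totient := by positivity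
  rw [cyclotomic_eval_eq_pow_totient_mul_of_moebius_radical_eq_one hm0 hmu (by linarith),
    cyclotomic_two_mul_eval_eq_pow_totient_mul_of_moebius_radical_eq_one hm0 hodd hmu (by linarith)]
  refine ⟨?_, mul_lt_of_lt_one_right hQφ h2, lt_mul_of_one_lt_right hQφ h3, ?_⟩
  · rw [mul_comm]
    gcongr
    linarith
  · rw [mul_comm]
    gcongr
    exact h4.trans_le (by gcongr; linarith)
end

section
/- Let m and n be distinct positive integers with φ(m) = φ(n). If Φ_m(t) - Φ_n(t) > 0 for all real t ≥ 2, then Φ_m(t) - Φ_n(t) > 0 for all real t with 0 < t ≤ 1/2. (Here Φ_m and Φ_n are evaluated at real arguments.) -/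
open Polynomial Finset

/-- Reflection identity for cyclotomic polynomials evaluated at `0 < t < 1`. -/
lemma cyclo_reflect : ∀ n : ℕ, 2 ≤ n → ∀ t : ℝ, 0 < t → t < 1 →
    (Polynomial.cyclotomic n ℝ).eval t
      = t ^ n.totient * (Polynomial.cyclotomic n ℝ).eval (1 / t) := by
  intro n
  induction n using Nat.strong_induction_on with
  | _ n ih =>
    intro h2 t ht ht1
    have hn0 : 0 < n := by omega
    have ht0 : t ≠ 0 := ht.ne'
    have hinv : (1 : ℝ) < 1 / t := by rw [lt_div_iff₀ ht]; linarith
    -- the product of evals of cyclotomics over divisors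
    have hprod : ∀ s : ℝ,
        (s - 1) * ∏ d ∈ n.divisors.erase 1, (cyclotomic d ℝ).eval s = s ^ n - 1 := by
      intro s
      have h1mem : (1 : ℕ) ∈ n.divisors := Nat.one_mem_divisors.mpr hn0.ne'
      have := congrArg (fun p : ℝ[X] => p.eval s)
        (prod_cyclotomic_eq_X_pow_sub_one hn0 ℝ)
      simp only [eval_prod, eval_sub, eval_pow, eval_X, eval_one] at this
      rw [← this, ← Finset.mul_prod_erase _ _ h1mem, cyclotomic_one]
      simp
    set D : Finset ℕ := (n.divisors.erase 1).erase n with hD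
    have hnmem : n ∈ n.divisors.erase 1 :=
      Finset.mem_erase.mpr ⟨by omega, Nat.mem_divisors_self n hn0.ne'⟩
    set Q : ℝ → ℝ := fun s => ∏ d ∈ D, (cyclotomic d ℝ).eval s with hQ
    have hsplit : ∀ s : ℝ, ∏ d ∈ n.divisors.erase 1, (cyclotomic d ℝ).eval s
        = (cyclotomic n ℝ).eval s * Q s := by
      intro s
      rw [hQ, ← Finset.mul_prod_erase _ _ hnmem]
    -- key relation A
    have hA : t * ((cyclotomic n ℝ).eval t * Q t)
        = t ^ n * ((cyclotomic n ℝ).eval (1 / t) * Q (1 / t)) := by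
      have e1 := hprod t
      have e2 := hprod (1 / t)
      rw [hsplit] at e1 e2
      rw [div_pow, one_pow] at e2
      have h1t : (1 : ℝ) - t ≠ 0 := by linarith
      apply mul_left_cancel₀ h1t
      have htn : (t : ℝ) ^ n ≠ 0 := pow_ne_zero _ ht0
      field_simp at e2
      nlinarith [e1, e2]
    set s : ℕ := ∑ d ∈ D, d.totient with hs
    -- key relation B by induction
    have hB : Q t = t ^ s * Q (1 / t) := by
      rw [hQ]
      simp only
      rw [← Finset.prod_pow_eq_pow_sum, ← Finset.prod_mul_distrib]
      apply Finset.prod_congr rfl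
      intro d hd
      have hd1 : d ≠ 1 := (Finset.mem_erase.mp (Finset.mem_erase.mp hd).2).1
      have hdn : d ≠ n := (Finset.mem_erase.mp hd).1
      have hdmem : d ∈ n.divisors := (Finset.mem_erase.mp (Finset.mem_erase.mp hd).2).2
      have hdvd : d ∣ n := (Nat.mem_divisors.mp hdmem).1
      have hdlt : d < n := lt_of_le_of_ne (Nat.le_of_dvd hn0 hdvd) hdn
      have hd2 : 2 ≤ d := by
        have := Nat.pos_of_mem_divisors hdmem
        omega
      exact ih d hdlt hd2 t ht ht1
    -- totient sum relation
    have hC : n = 1 + n.totient + s := by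
      have := Nat.sum_totient n
      have h1mem : (1 : ℕ) ∈ n.divisors := Nat.one_mem_divisors.mpr hn0.ne'
      rw [← Finset.add_sum_erase _ _ h1mem, ← Finset.add_sum_erase _ _ hnmem] at this
      simpa [Nat.totient_one, add_assoc] using this.symm
    have hpow : t ^ n = t * t ^ n.totient * t ^ s := by
      nth_rewrite 1 [hC]
      ring
    have hQpos : 0 < Q (1 / t) := by
      apply Finset.prod_pos
      intro d _
      exact cyclotomic_pos' d hinv
    have hcan : t * t ^ s * Q (1 / t) ≠ 0 := by
      have : (0:ℝ) < t * t ^ s * Q (1/t) := by positivity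
      exact this.ne'
    apply mul_right_cancel₀ hcan
    calc (cyclotomic n ℝ).eval t * (t * t ^ s * Q (1 / t))
        = t * ((cyclotomic n ℝ).eval t * (t ^ s * Q (1 / t))) := by ring
      _ = t * ((cyclotomic n ℝ).eval t * Q t) := by rw [← hB]
      _ = t ^ n * ((cyclotomic n ℝ).eval (1 / t) * Q (1 / t)) := hA
      _ = t ^ n.totient * (cyclotomic n ℝ).eval (1 / t) * (t * t ^ s * Q (1 / t)) := by
          rw [hpow]; ring

/-- Let `m ≠ n` be positive integers with `φ(m) = φ(n)`. If
`Φ_m(t) - Φ_n(t) > 0` for all real `t ≥ 2`, then `Φ_m(t) - Φ_n(t) > 0`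
for all real `t` with `0 < t ≤ 1/2`. -/
theorem cyclotomic_sub_pos_small_of_pos_large (m n : ℕ) (hm : 0 < m) (hn : 0 < n)
    (hmn : m ≠ n) (hphi : m.totient = n.totient)
    (h : ∀ t : ℝ, 2 ≤ t →
      0 < (Polynomial.cyclotomic m ℝ).eval t - (Polynomial.cyclotomic n ℝ).eval t) :
    ∀ t : ℝ, 0 < t → t ≤ 1 / 2 →
      0 < (Polynomial.cyclotomic m ℝ).eval t - (Polynomial.cyclotomic n ℝ).eval t := by
  intro t ht ht2
  by_cases hm1 : m = 1
  · -- then n = 2, contradiction with h 2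
    exfalso
    have : n.totient = 1 := by rw [← hphi, hm1, Nat.totient_one]
    have hn2 : n = 2 := by
      rcases Nat.totient_eq_one_iff.mp this with h1 | h1
      · exact absurd (hm1.trans h1.symm) hmn
      · exact h1
    have := h 2 le_rfl
    simp [hm1, hn2, cyclotomic_one, cyclotomic_two] at this
    norm_num at this
  by_cases hn1 : n = 1
  · -- then m = 2, difference is 2
    have : m.totient = 1 := by rw [hphi, hn1, Nat.totient_one]
    have hm2 : m = 2 := by
      rcases Nat.totient_eq_one_iff.mp this with h1 | h1
      · exact absurd (h1.trans hn1.symm) hmn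
      · exact h1
    simp [hm2, hn1, cyclotomic_one, cyclotomic_two]
  · -- main case: m, n ≥ 2
    have hm2 : 2 ≤ m := by omega
    have hn2 : 2 ≤ n := by omega
    have ht1 : t < 1 := by linarith
    have hinv : (2 : ℝ) ≤ 1 / t := by
      rw [le_div_iff₀ ht]; linarith
    have hmr := cyclo_reflect m hm2 t ht ht1
    have hnr := cyclo_reflect n hn2 t ht ht1
    rw [hmr, hnr, hphi, ← mul_sub]
    exact mul_pos (pow_pos ht _) (h (1 / t) hinv)
end

section
/- Let m and n be distinct positive integers with φ(m) = φ(n), and let t be a positive real number. Then Φ_m(t) - Φ_n(t) and Φ_m(1/t) - Φ_n(1/t) have the same sign: Φ_m(t) > Φ_n(t) if and only if Φ_m(1/t) > Φ_n(1/t). -/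
/-!
For `n ≠ 1` the cyclotomic polynomial `Φ_n` is palindromic, so `t ^ φ(n) * Φ_n(1/t) = Φ_n(t)`;
when `φ(m) = φ(n)` the two comparisons therefore differ by the positive factor `t ^ φ(n)`.
Palindromy follows by strong induction from `X ^ n - 1 = ∏_{d ∣ n} Φ_d`: reversing negates the
left side, and among the factors only `Φ_1 = X - 1` changes sign.
If `m` or `n` is `1`, both lie in `{1, 2}` and one compares `t - 1` with `t + 1` directly.
-/

open Polynomial

namespace Polynomial

@[simp]
theorem reverse_one {R : Type*} [Semiring R] : (1 : R[X]).reverse = 1 := by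
  simpa using reverse_C (1 : R)

theorem reverse_prod {R ι : Type*} [CommSemiring R] [NoZeroDivisors R] (s : Finset ι)
    (f : ι → R[X]) : (∏ i ∈ s, f i).reverse = ∏ i ∈ s, (f i).reverse := by
  classical
  induction s using Finset.induction_on with
  | empty => simp
  | insert i s hi ih => rw [Finset.prod_insert hi, Finset.prod_insert hi, reverse_mul_of_domain, ih]

theorem reverse_X_pow_sub_one {R : Type*} [Ring R] [Nontrivial R] (n : ℕ) :
    (X ^ n - 1 : R[X]).reverse = -(X ^ n - 1) := by
  rw [sub_eq_add_neg, ← C_1, ← C_neg, reverse_add_C, ← mul_one (X ^ n), reverse_X_pow_mul]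
  simp

section Domain

variable {R : Type*} [CommRing R] [IsDomain R]

theorem reverse_cyclotomic_one : (cyclotomic 1 R).reverse = -cyclotomic 1 R := by
  simpa using reverse_X_pow_sub_one (R := R) 1

theorem reverse_cyclotomic {n : ℕ} (hn : n ≠ 1) : (cyclotomic n R).reverse = cyclotomic n R := by
  induction n using Nat.strong_induction_on with
  | _ n ih =>
  obtain rfl | hn0 := eq_or_ne n 0
  · simp
  set P := ∏ d ∈ n.properDivisors, cyclotomic d R
  have hone : 1 ∈ n.properDivisors := Nat.one_mem_properDivisors_iff_one_lt.mpr (by omega)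
  have hP : P.reverse = -P := by
    simp only [P]
    rw [reverse_prod, ← Finset.mul_prod_erase _ _ hone, ← Finset.mul_prod_erase _ _ hone,
      reverse_cyclotomic_one, Finset.prod_congr rfl fun d hd =>
        ih d (Nat.mem_properDivisors.mp (Finset.mem_of_mem_erase hd)).2 (Finset.ne_of_mem_erase hd),
      neg_mul]
  have hprod : cyclotomic n R * P = X ^ n - 1 := by
    rw [← prod_cyclotomic_eq_X_pow_sub_one (Nat.pos_of_ne_zero hn0),
      ← Nat.cons_self_properDivisors hn0, Finset.prod_cons]
  have hP0 : P ≠ 0 := Finset.prod_ne_zero_iff.mpr fun d _ => cyclotomic_ne_zero d R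
  refine mul_right_cancel₀ hP0 ?_
  calc (cyclotomic n R).reverse * P = -(cyclotomic n R * P).reverse := by
        rw [reverse_mul_of_domain, hP, mul_neg, neg_neg]
    _ = cyclotomic n R * P := by rw [hprod, reverse_X_pow_sub_one, neg_neg]

end Domain

theorem cyclotomic_eval_inv_mul_pow_totient {K : Type*} [Field K] {n : ℕ} (hn : n ≠ 1) {t : K}
    (ht : t ≠ 0) : (cyclotomic n K).eval t⁻¹ * t ^ n.totient = (cyclotomic n K).eval t := by
  have : Invertible t := invertibleOfNonzero ht
  simpa [reverse_cyclotomic hn, natDegree_cyclotomic] using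
    eval₂_reverse_mul_pow (RingHom.id K) t (cyclotomic n K)

end Polynomial

theorem cyclotomic_sub_sign_inv_general (m n : ℕ)
    (hphi : m.totient = n.totient) (t : ℝ) (ht : 0 < t) :
    (Polynomial.cyclotomic n ℝ).eval t < (Polynomial.cyclotomic m ℝ).eval t ↔
      (Polynomial.cyclotomic n ℝ).eval t⁻¹ < (Polynomial.cyclotomic m ℝ).eval t⁻¹ := by
  by_cases hmn : m ≠ 1 ∧ n ≠ 1
  · rw [← cyclotomic_eval_inv_mul_pow_totient hmn.1 ht.ne',
      ← cyclotomic_eval_inv_mul_pow_totient hmn.2 ht.ne', hphi]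
    exact mul_lt_mul_iff_of_pos_right (pow_pos ht _)
  · have htot : m.totient = 1 := by
      rcases not_and_or.mp hmn with h | h <;> simp_all
    obtain rfl | rfl := Nat.totient_eq_one_iff.mp htot <;>
      obtain rfl | rfl := Nat.totient_eq_one_iff.mp (hphi ▸ htot) <;>
      simp only [cyclotomic_one, cyclotomic_two, eval_sub, eval_add, eval_X, eval_one, lt_irrefl] <;>
      constructor <;> intro <;> linarith

/-- Let `m ≠ n` be positive integers with `φ(m) = φ(n)`, and let `t > 0` be real.
Then `Φ_m(t) > Φ_n(t)` if and only if `Φ_m(1/t) > Φ_n(1/t)`. -/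
theorem cyclotomic_sub_sign_inv (m n : ℕ) (hm : 0 < m) (hn : 0 < n)
    (hmn : m ≠ n) (hphi : m.totient = n.totient) (t : ℝ) (ht : 0 < t) :
    (Polynomial.cyclotomic n ℝ).eval t < (Polynomial.cyclotomic m ℝ).eval t ↔
      (Polynomial.cyclotomic n ℝ).eval t⁻¹ < (Polynomial.cyclotomic m ℝ).eval t⁻¹ :=
  cyclotomic_sub_sign_inv_general m n hphi t ht
end
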